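/- Let A = Mₙ(ℂ). Then the open subsets of Σ_* are in bijective correspondence with the monotone projection assignments, i.e. the functions S assigning to each context C a projection S(C) ∈ C such that C ⊆ C' implies S(C) ≤ S(C'); the bijection sends such an S to the open set U_S := {(C,λ) ∈ Σ : λ(S(C)) = 1}, so that (U_S)_C is the clopen subset of Σ_C determined by the projection S(C). -/

import Mathlib

open WeakDual

variable (n : ℕ)

/-- A classical context in `Mₙ(ℂ)`: a commutative unital star-subalgebra. -/
structure MContext where
  carrier : Subalgebra ℂ (Matrix (Fin n) (Fin n) ℂ)
  star_mem' : ∀ x ∈ carrier, star x ∈ carrier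
  mul_comm' : ∀ x ∈ carrier, ∀ y ∈ carrier, x * y = y * x

variable {n}

/-- The Gelfand spectrum of a context: the character space of `C`. -/
abbrev MContext.Spec (C : MContext n) : Type _ := characterSpace ℂ C.carrier

/-- The inclusion of a smaller context into a larger one, as a continuous linear map. -/
def MContext.inclCLM {D C : MContext n} (h : D.carrier ≤ C.carrier) :
    D.carrier →L[ℂ] C.carrier where
  toLinearMap := (Subalgebra.inclusion h).toLinearMap
  cont := continuous_induced_rng.mpr continuous_subtype_val

/-- Restriction of a character along an inclusion of contexts. -/
noncomputable def MContext.restrictChar {D C : MContext n} (h : D.carrier ≤ C.carrier)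
    (lam : C.Spec) : D.Spec :=
  ⟨(lam : WeakDual ℂ C.carrier).comp (MContext.inclCLM h), by
    constructor
    · intro h0
      have h1 : (lam : WeakDual ℂ C.carrier).comp (MContext.inclCLM h) (1 : D.carrier) = 0 := by
        rw [h0]; rfl
      have h2 : (lam : WeakDual ℂ C.carrier).comp (MContext.inclCLM h) (1 : D.carrier) = 1 := by
        show lam ((MContext.inclCLM h) (1 : D.carrier)) = 1
        have h3 : (MContext.inclCLM h) (1 : D.carrier) = (1 : C.carrier) := rfl
        rw [h3]
        exact map_one lam
      rw [h1] at h2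
      exact zero_ne_one h2
    · intro x y
      show lam ((MContext.inclCLM h) (x * y))
          = lam ((MContext.inclCLM h) x) * lam ((MContext.inclCLM h) y)
      have h4 : (MContext.inclCLM h) (x * y)
          = (MContext.inclCLM h) x * (MContext.inclCLM h) y := rfl
      rw [h4]
      exact map_mul lam _ _⟩

/-- The disjoint union of all Gelfand spectra of contexts. -/
abbrev MSigmaSpace (n : ℕ) : Type _ := (C : MContext n) × C.Spec

/-- The topology `𝒪 Σ_*` of the covariant approach: a set is open iff each of its fibres
is open and it is closed under passing to extensions of characters. -/
instance : TopologicalSpace (MSigmaSpace n) where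
  IsOpen U := (∀ C : MContext n, IsOpen {lam : C.Spec | Sigma.mk C lam ∈ U}) ∧
    ∀ (C C' : MContext n) (h : C.carrier ≤ C'.carrier) (lam' : C'.Spec),
      Sigma.mk C (MContext.restrictChar h lam') ∈ U → Sigma.mk C' lam' ∈ U
  isOpen_univ := ⟨fun _ => isOpen_univ, fun _ _ _ _ _ => trivial⟩
  isOpen_inter := fun U V hU hV => ⟨fun C => (hU.1 C).inter (hV.1 C),
    fun C C' h lam hm => ⟨hU.2 C C' h lam hm.1, hV.2 C C' h lam hm.2⟩⟩
  isOpen_sUnion := fun S hS => by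
    constructor
    · intro C
      have h1 : {lam : C.Spec | Sigma.mk C lam ∈ ⋃₀ S} =
          ⋃ U ∈ S, {lam : C.Spec | Sigma.mk C lam ∈ U} := by
        ext lam; simp
      rw [h1]
      exact isOpen_biUnion fun U hU => (hS U hU).1 C
    · rintro C C' h lam ⟨U, hUS, hmU⟩
      exact ⟨U, hUS, (hS U hUS).2 C C' h lam hmU⟩

open scoped ComplexOrder

variable (n) in
/-- A monotone projection assignment: a choice, for each context `C` of `Mₙ(ℂ)`, of a
projection `S(C) ∈ C`, monotone (in the Loewner order) in the context. -/
structure ProjAssignment where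
  toFun : MContext n → Matrix (Fin n) (Fin n) ℂ
  mem' : ∀ C : MContext n, toFun C ∈ C.carrier
  star_eq' : ∀ C : MContext n, star (toFun C) = toFun C
  idem' : ∀ C : MContext n, toFun C * toFun C = toFun C
  mono' : ∀ C C' : MContext n, C.carrier ≤ C'.carrier → (toFun C' - toFun C).PosSemidef

/-- The subset of `Σ_*` associated to a monotone projection assignment `S`: the pairs
`(C, λ)` with `λ (S C) = 1`. -/
def ProjAssignment.embed (S : ProjAssignment n) : Set (MSigmaSpace n) :=
  {p : MSigmaSpace n | p.2 ⟨S.toFun p.1, S.mem' p.1⟩ = 1}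

/-!
Every context `C` is a finite-dimensional commutative C⋆-algebra, so Gelfand duality identifies
it with `C(Σ_C, ℂ)`, where `Σ_C` is finite and hence discrete. Thus every subset of `Σ_C` is
clopen and is the support of exactly one projection of `C`, namely its indicator function, and
an open set of `Σ_*` is nothing but a family of subsets `U_C` stable under extension of
characters. For `D ⊆ C` and indicator projections `p_D`, `p_C` of `U_D`, `U_C`, the Loewner
inequality `p_D ≤ p_C`, i.e. `p_C p_D = p_D`, says precisely that every extension of a character
in `U_D` lies in `U_C`.
-/

section

open scoped Matrix.Norms.L2Operator MatrixOrder

theorem Matrix.posSemidef_sub_iff_mul_eq_right {ι : Type*} [Fintype ι] [DecidableEq ι]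
    {p q : Matrix ι ι ℂ} (hp : IsStarProjection p) (hq : IsStarProjection q) :
    (q - p).PosSemidef ↔ q * p = p :=
  hp.le_iff_mul_eq_right hq

namespace MContext

variable (C : MContext n)

-- The operator norm induces the product topology on matrices, the topology `C.Spec` is built on,
-- so Gelfand duality for this instance is about `C.Spec` itself.
noncomputable instance : CommCStarAlgebra C.carrier where
  star x := ⟨star x.1, C.star_mem' _ x.2⟩
  star_involutive x := Subtype.ext (star_star x.1)
  star_mul x y := Subtype.ext (star_mul x.1 y.1)
  star_add x y := Subtype.ext (star_add x.1 y.1)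
  star_smul c x := Subtype.ext (star_smul c x.1)
  mul_comm x y := Subtype.ext (C.mul_comm' _ x.2 _ y.2)
  toCompleteSpace := FiniteDimensional.complete ℂ _
  norm_mul_self_le x := (CStarRing.norm_star_mul_self (x := (x : Matrix (Fin n) (Fin n) ℂ))).ge

instance : Finite C.Spec := .of_equiv _ CharacterSpace.equivAlgHom.symm

variable {C} in
theorem _root_.IsStarProjection.coe {p : C.carrier} (hp : IsStarProjection p) :
    IsStarProjection (p : Matrix (Fin n) (Fin n) ℂ) :=
  ⟨congr(Subtype.val $(hp.isIdempotentElem)), congr(Subtype.val $(hp.isSelfAdjoint))⟩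

theorem ext_char {x y : C.carrier} (h : ∀ lam : C.Spec, lam x = lam y) : x = y :=
  (gelfandStarTransform C.carrier).injective (ContinuousMap.ext h)

theorem eq_of_char_eq_one_iff {p q : C.carrier} (hp : IsIdempotentElem p)
    (hq : IsIdempotentElem q) (h : ∀ lam : C.Spec, lam p = 1 ↔ lam q = 1) : p = q := by
  refine C.ext_char fun lam => ?_
  have hlam := h lam
  rcases IsIdempotentElem.iff_eq_zero_or_one.mp (hp.map lam) with hp' | hp' <;>
    rcases IsIdempotentElem.iff_eq_zero_or_one.mp (hq.map lam) with hq' | hq' <;>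
    simp_all

noncomputable def indicatorProj (T : Set C.Spec) : C.carrier :=
  (gelfandStarTransform C.carrier).symm ⟨T.indicator 1, continuous_of_discreteTopology⟩

theorem indicatorProj_apply (T : Set C.Spec) (lam : C.Spec) :
    lam (C.indicatorProj T) = T.indicator 1 lam :=
  DFunLike.congr_fun ((gelfandStarTransform C.carrier).apply_symm_apply _) lam

theorem isStarProjection_indicatorProj (T : Set C.Spec) :
    IsStarProjection (C.indicatorProj T) := by
  refine ⟨C.ext_char fun lam => ?_, C.ext_char fun lam => ?_⟩
  · rw [map_mul, indicatorProj_apply]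
    by_cases h : lam ∈ T <;> simp [h]
  · rw [map_star, indicatorProj_apply]
    by_cases h : lam ∈ T <;> simp [h]

theorem restrictChar_apply {D : MContext n} (h : D.carrier ≤ C.carrier) (lam : C.Spec)
    (x : D.carrier) : restrictChar h lam x = lam (Subalgebra.inclusion h x) := rfl

theorem indicatorProj_mul_inclusion {D : MContext n} (h : D.carrier ≤ C.carrier)
    {T : Set D.Spec} {T' : Set C.Spec} (hT : ∀ lam, restrictChar h lam ∈ T → lam ∈ T') :
    C.indicatorProj T' * Subalgebra.inclusion h (D.indicatorProj T)
      = Subalgebra.inclusion h (D.indicatorProj T) := by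
  refine C.ext_char fun lam => ?_
  rw [map_mul, ← restrictChar_apply, indicatorProj_apply, indicatorProj_apply]
  by_cases hlam : restrictChar h lam ∈ T
  · simp [hlam, hT _ hlam]
  · simp [hlam]

end MContext

end

theorem MSigmaSpace.isOpen_iff {U : Set (MSigmaSpace n)} :
    IsOpen U ↔ ∀ (C C' : MContext n) (h : C.carrier ≤ C'.carrier) (lam' : C'.Spec),
      ⟨C, MContext.restrictChar h lam'⟩ ∈ U → ⟨C', lam'⟩ ∈ U :=
  and_iff_right fun _ => isOpen_discrete _

namespace ProjAssignment

theorem toFun_injective : Function.Injective (toFun (n := n)) := by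
  rintro ⟨S, _⟩ ⟨T, _⟩ rfl
  rfl

variable (S : ProjAssignment n)

def proj (C : MContext n) : C.carrier := ⟨S.toFun C, S.mem' C⟩

theorem mem_embed {C : MContext n} {lam : C.Spec} : ⟨C, lam⟩ ∈ S.embed ↔ lam (S.proj C) = 1 :=
  Iff.rfl

theorem isStarProjection (C : MContext n) : IsStarProjection (S.toFun C) :=
  ⟨S.idem' C, S.star_eq' C⟩

theorem isIdempotentElem_proj (C : MContext n) : IsIdempotentElem (S.proj C) :=
  Subtype.ext (S.idem' C)

theorem proj_mul_inclusion {C C' : MContext n} (h : C.carrier ≤ C'.carrier) :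
    S.proj C' * Subalgebra.inclusion h (S.proj C) = Subalgebra.inclusion h (S.proj C) :=
  Subtype.ext <|
    (Matrix.posSemidef_sub_iff_mul_eq_right (S.isStarProjection C) (S.isStarProjection C')).mp
      (S.mono' C C' h)

theorem isOpen_embed : IsOpen S.embed := by
  refine MSigmaSpace.isOpen_iff.mpr fun C C' h lam' hmem => ?_
  rw [mem_embed, MContext.restrictChar_apply] at hmem
  rw [mem_embed, ← mul_one (lam' _), ← hmem, ← map_mul, S.proj_mul_inclusion h]

theorem embed_injective : Function.Injective (embed (n := n)) := by
  intro S T hST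
  refine toFun_injective (funext fun C => congr(Subtype.val $(C.eq_of_char_eq_one_iff
    (S.isIdempotentElem_proj C) (T.isIdempotentElem_proj C) fun lam => ?_)))
  rw [← mem_embed, ← mem_embed, hST]

noncomputable def ofIsOpen (U : Set (MSigmaSpace n)) (hU : IsOpen U) : ProjAssignment n where
  toFun C := C.indicatorProj (Sigma.mk C ⁻¹' U)
  mem' C := (C.indicatorProj _).2
  star_eq' C := (C.isStarProjection_indicatorProj _).coe.isSelfAdjoint
  idem' C := (C.isStarProjection_indicatorProj _).coe.isIdempotentElem
  mono' C C' h :=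
    (Matrix.posSemidef_sub_iff_mul_eq_right (C.isStarProjection_indicatorProj _).coe
      (C'.isStarProjection_indicatorProj _).coe).mpr
      congr(Subtype.val $(C'.indicatorProj_mul_inclusion h (MSigmaSpace.isOpen_iff.mp hU C C' h)))

theorem embed_ofIsOpen (U : Set (MSigmaSpace n)) (hU : IsOpen U) : (ofIsOpen U hU).embed = U := by
  ext ⟨C, lam⟩
  change lam (C.indicatorProj _) = 1 ↔ _
  by_cases h : (⟨C, lam⟩ : MSigmaSpace n) ∈ U <;> simp [C.indicatorProj_apply, h]

end ProjAssignment

/-- For `A = Mₙ(ℂ)`, the open subsets of `Σ_*` are in bijective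
correspondence with the monotone projection assignments, via `S ↦ {(C,λ) : λ (S C) = 1}`. -/
theorem statement18 :
    (∀ S : ProjAssignment n, IsOpen S.embed) ∧
    Function.Injective (ProjAssignment.embed (n := n)) ∧
    (∀ U : Set (MSigmaSpace n), IsOpen U → ∃ S : ProjAssignment n, S.embed = U) :=
  ⟨ProjAssignment.isOpen_embed, ProjAssignment.embed_injective,
    fun U hU => ⟨.ofIsOpen U hU, ProjAssignment.embed_ofIsOpen U hU⟩⟩
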